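/- Let w: ℝ → ℝ≥0 be a measurable weight with finite moments, and θ > 0. Then ∫_{ℝ^N} ∏_{1≤i<j≤N}(x_j - x_i)(sgn(x_j)|x_j|^θ - sgn(x_i)|x_i|^θ) ∏_{k=1}^N w(x_k) dx = N! · det[ ∫_ℝ w(x) |x|^{j-1+θ(k-1)} (sgn x)^{j+k} dx ]_{j,k=1}^N. -/

import Mathlib

/-!
Both products in the integrand are Vandermonde determinants, in the points `x k` and in the
points `sign (x k) * |x k| ^ θ`, and the weights can be absorbed into the columns of the second.
Andréief's identity then applies: expanding both determinants over permutations, Fubini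
factorises each term into a product of one-dimensional moments, and reindexing the double sum
over permutations produces `N!` copies of the determinant of the moment matrix. Off the null
set `{0}` the moment integrand `x ^ j * (sign x * |x| ^ θ) ^ k` equals
`|x| ^ (j + θ k) * sign x ^ (j + k + 2)`.
-/

open MeasureTheory Finset Matrix Equiv

namespace Real

theorem measurable_sign : Measurable Real.sign :=
  Measurable.ite measurableSet_Iio measurable_const
    (Measurable.ite measurableSet_Ioi measurable_const measurable_const)

theorem sign_mul_abs (x : ℝ) : sign x * |x| = x := by
  rcases lt_trichotomy x 0 with h | rfl | h
  · rw [sign_of_neg h, abs_of_neg h, neg_one_mul, neg_neg]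
  · rw [abs_zero, mul_zero]
  · rw [sign_of_pos h, abs_of_pos h, one_mul]

theorem abs_sign_le_one (x : ℝ) : |sign x| ≤ 1 := by
  rcases sign_apply_eq x with h | h | h <;> simp [h]

theorem sign_sq {x : ℝ} (hx : x ≠ 0) : sign x ^ 2 = 1 := by
  rcases sign_apply_eq_of_ne_zero x hx with h | h <;> simp [h]

theorem pow_mul_sign_mul_rpow_pow {x : ℝ} (hx : x ≠ 0) (θ : ℝ) (j k : ℕ) :
    x ^ j * (sign x * |x| ^ θ) ^ k = |x| ^ ((j : ℝ) + θ * k) * sign x ^ (j + k + 2) := by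
  rw [rpow_add (abs_pos.mpr hx), rpow_natCast, rpow_mul_natCast (abs_nonneg x), pow_add,
    sign_sq hx]
  have hxj : x ^ j = sign x ^ j * |x| ^ j := by rw [← mul_pow, sign_mul_abs]
  rw [hxj]
  ring

end Real

section Andreief

variable {ι 𝕜 : Type*} [Fintype ι] [DecidableEq ι]

theorem Matrix.sum_perm_sum_perm_sign_mul_prod {R : Type*} [CommRing R] (M : Matrix ι ι R) :
    ∑ σ : Perm ι, ∑ τ : Perm ι, ((Perm.sign σ : ℤ) : R) * (Perm.sign τ : ℤ) *
      ∏ k, M (σ k) (τ k) = (Fintype.card ι).factorial * M.det := by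
  rw [Finset.sum_comm, ← Fintype.card_perm, ← nsmul_eq_mul, ← Finset.card_univ,
    ← Finset.sum_const]
  refine Finset.sum_congr rfl fun τ _ => ?_
  have h := det_permute' τ M
  rw [det_apply'] at h
  simp only [submatrix_apply, id_eq] at h
  have hτ : ((Perm.sign τ : ℤ) : R) * (Perm.sign τ : ℤ) = 1 := by
    rw [← Int.cast_mul, ← Units.val_mul, Int.units_mul_self, Units.val_one, Int.cast_one]
  simp_rw [mul_right_comm _ ((Perm.sign τ : ℤ) : R), ← Finset.sum_mul, h]
  rw [mul_right_comm, hτ, one_mul]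

theorem Matrix.det_mul_det_eq_sum_sum_prod {α R : Type*} [CommRing R] (φ ψ : ι → α → R)
    (x : ι → α) :
    (of fun i k => φ i (x k)).det * (of fun i k => ψ i (x k)).det =
      ∑ σ : Perm ι, ∑ τ : Perm ι, ((Perm.sign σ : ℤ) : R) * (Perm.sign τ : ℤ) *
        ∏ k, φ (σ k) (x k) * ψ (τ k) (x k) := by
  rw [det_apply', det_apply', Finset.sum_mul_sum]
  refine Finset.sum_congr rfl fun σ _ => Finset.sum_congr rfl fun τ _ => ?_
  simp only [of_apply, Finset.prod_mul_distrib]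
  ring

theorem MeasureTheory.integral_det_mul_det [RCLike 𝕜] {α : Type*} [MeasurableSpace α]
    (μ : Measure α) [SigmaFinite μ] (φ ψ : ι → α → 𝕜)
    (h : ∀ i j, Integrable (fun x => φ i x * ψ j x) μ) :
    ∫ x : ι → α, (of fun i k => φ i (x k)).det * (of fun i k => ψ i (x k)).det
        ∂(Measure.pi fun _ => μ) =
      ((Fintype.card ι).factorial : 𝕜) * (of fun i j => ∫ x, φ i x * ψ j x ∂μ).det := by
  have hint (σ τ : Perm ι) :
      Integrable (fun x : ι → α => ∏ k, φ (σ k) (x k) * ψ (τ k) (x k))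
        (Measure.pi fun _ => μ) :=
    Integrable.fintype_prod fun k => h (σ k) (τ k)
  simp_rw [det_mul_det_eq_sum_sum_prod]
  rw [← sum_perm_sum_perm_sign_mul_prod, integral_finsetSum _ fun σ _ =>
    integrable_finsetSum _ fun τ _ => (hint σ τ).const_mul _]
  refine Finset.sum_congr rfl fun σ _ => ?_
  rw [integral_finsetSum _ fun τ _ => (hint σ τ).const_mul _]
  refine Finset.sum_congr rfl fun τ _ => ?_
  rw [integral_const_mul, integral_fintype_prod_eq_prod (fun k y => φ (σ k) y * ψ (τ k) y)]
  rfl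

end Andreief

theorem Matrix.prod_Ioi_sub_mul_sub_mul_prod_eq_det_mul_det {R : Type*} [CommRing R] {n : ℕ}
    (v u c : Fin n → R) :
    (∏ i, ∏ j ∈ Finset.Ioi i, (v j - v i) * (u j - u i)) * ∏ k, c k =
      (of fun i k : Fin n => v k ^ (i : ℕ)).det *
        (of fun i k : Fin n => c k * u k ^ (i : ℕ)).det := by
  have hv : (of fun i k : Fin n => v k ^ (i : ℕ)) = (vandermonde v)ᵀ := rfl
  have hu : (of fun i k : Fin n => c k * u k ^ (i : ℕ)) =
      of fun i k => c k * (vandermonde u)ᵀ i k := rfl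
  rw [hv, hu, det_mul_row, det_transpose, det_transpose, det_vandermonde, det_vandermonde]
  simp only [Finset.prod_mul_distrib]
  ring

theorem andreief_identity_general (N : ℕ) (θ : ℝ)
    (w : ℝ → ℝ)
    (hmom : ∀ j k : ℕ, j < N → k < N →
      Integrable (fun x : ℝ => w x * |x| ^ ((j : ℝ) + θ * k))) :
    (∫ x : Fin N → ℝ,
        (∏ i : Fin N, ∏ j ∈ Finset.Ioi i,
            (x j - x i) * (Real.sign (x j) * |x j| ^ θ - Real.sign (x i) * |x i| ^ θ)) *
          ∏ k : Fin N, w (x k)) =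
      (Nat.factorial N : ℝ) *
        Matrix.det (Matrix.of fun j k : Fin N =>
          ∫ x : ℝ, w x * |x| ^ ((j : ℝ) + θ * (k : ℕ)) * (Real.sign x) ^ ((j : ℕ) + (k : ℕ) + 2)) := by
  set F : ℝ → ℝ := fun x => Real.sign x * |x| ^ θ
  have hentry (j k : ℕ) : (fun x => x ^ j * (w x * F x ^ k)) =ᵐ[volume]
      fun x => w x * |x| ^ ((j : ℝ) + θ * k) * Real.sign x ^ (j + k + 2) := by
    filter_upwards [Measure.ae_ne volume 0] with x hx
    rw [mul_left_comm, Real.pow_mul_sign_mul_rpow_pow hx, mul_assoc]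
  have hint (j k : Fin N) : Integrable (fun x => x ^ (j : ℕ) * (w x * F x ^ (k : ℕ))) := by
    refine Integrable.congr ?_ (hentry j k).symm
    refine (hmom j k j.isLt k.isLt).mul_bdd (c := 1)
      (Real.measurable_sign.pow_const _).aestronglyMeasurable
      (Filter.Eventually.of_forall fun x => ?_)
    rw [norm_pow, Real.norm_eq_abs]
    exact pow_le_one₀ (abs_nonneg _) (Real.abs_sign_le_one x)
  calc _ = ∫ x : Fin N → ℝ, (of fun i k : Fin N => x k ^ (i : ℕ)).det *
        (of fun i k : Fin N => w (x k) * F (x k) ^ (i : ℕ)).det := by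
        congr 1 with x
        exact prod_Ioi_sub_mul_sub_mul_prod_eq_det_mul_det x (fun k => F (x k)) (fun k => w (x k))
    _ = (N.factorial : ℝ) *
          (of fun j k : Fin N => ∫ x, x ^ (j : ℕ) * (w x * F x ^ (k : ℕ))).det := by
        simpa only [volume_pi, Fintype.card_fin] using
          integral_det_mul_det volume (fun (i : Fin N) y => y ^ (i : ℕ))
            (fun (i : Fin N) y => w y * F y ^ (i : ℕ)) hint
    _ = _ := by
        congr 2
        funext j k
        exact integral_congr_ae (hentry j k)

/-- Andréief/Heine-type identity for the generalised two-product ensemble on ℝ. -/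
theorem andreief_identity (N : ℕ) (θ : ℝ) (hθ : 0 < θ)
    (w : ℝ → ℝ) (hw : ∀ x, 0 ≤ w x) (hmeas : Measurable w)
    (hmom : ∀ j k : ℕ, j < N → k < N →
      Integrable (fun x : ℝ => w x * |x| ^ ((j : ℝ) + θ * k))) :
    (∫ x : Fin N → ℝ,
        (∏ i : Fin N, ∏ j ∈ Finset.Ioi i,
            (x j - x i) * (Real.sign (x j) * |x j| ^ θ - Real.sign (x i) * |x i| ^ θ)) *
          ∏ k : Fin N, w (x k)) =
      (Nat.factorial N : ℝ) *
        Matrix.det (Matrix.of fun j k : Fin N =>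
          ∫ x : ℝ, w x * |x| ^ ((j : ℝ) + θ * (k : ℕ)) * (Real.sign x) ^ ((j : ℕ) + (k : ℕ) + 2)) :=
  andreief_identity_general N θ w hmom
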